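/- Let N be a norm on ℝ², let p, q, w, u ∈ ℝ² with N(w) = N(u) = 1, and define h : ℝ² → [0,∞) by h(z) := N((p + z₁·w) − (q + z₂·u)). Let ℓ ⊆ ℝ² be a valley of positive slope for h, i.e., a line of positive slope such that for every z ∈ ℓ the function t ↦ h(z₁ + t, z₂ − t) is non-increasing on (−∞,0] and non-decreasing on [0,∞). Let x, y ∈ ℝ² with x₁ ≤ y₁ and x₂ ≤ y₂, and set Ξ := [x₁,y₁] × [x₂,y₂]. (i) If ℓ ∩ Ξ ≠ ∅, let x̂ be the componentwise-minimal and ŷ the componentwise-maximal point of ℓ ∩ Ξ (so x̂ shares a coordinate with x and ŷ shares a coordinate with y); then the (x,y)-path tracing the line segments x → x̂ → ŷ → y (travelling along ℓ from x̂ to ŷ) attains opt_h(x,y), i.e., its cost is less than or equal to the cost of every (x,y)-path. (ii) If ℓ ∩ Ξ = ∅, let ξ be whichever of (x₁,y₂) and (y₁,x₂) has the smaller Euclidean distance to ℓ; then the (x,y)-path tracing the line segments x → ξ → y attains opt_h(x,y). -/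

import Mathlib

/-- `N : ℝ × ℝ → ℝ` is a norm on `ℝ²`. -/
def IsNorm (N : ℝ × ℝ → ℝ) : Prop :=
  (∀ z : ℝ × ℝ, 0 ≤ N z) ∧
  (∀ z : ℝ × ℝ, N z = 0 ↔ z = 0) ∧
  (∀ (c : ℝ) (z : ℝ × ℝ), N (c • z) = |c| * N z) ∧
  (∀ z w : ℝ × ℝ, N (z + w) ≤ N z + N w)

/-- An `(x,y)`-path: a function `f : [x₁+x₂, y₁+y₂] → ℝ` with `f(x₁+x₂) = x₁`,
`f(y₁+y₂) = y₁` such that both `f` and `s ↦ s − f s` are monotone non-decreasing;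
it encodes the monotone unit-`ℓ¹`-speed curve `s ↦ (f s, s − f s)` from `x` to `y`. -/
def IsPath (x y : ℝ × ℝ) (f : ℝ → ℝ) : Prop :=
  x.1 ≤ y.1 ∧ x.2 ≤ y.2 ∧
  f (x.1 + x.2) = x.1 ∧ f (y.1 + y.2) = y.1 ∧
  MonotoneOn f (Set.Icc (x.1 + x.2) (y.1 + y.2)) ∧
  MonotoneOn (fun s => s - f s) (Set.Icc (x.1 + x.2) (y.1 + y.2))

/-- The cost of an `(x,y)`-path `f` with respect to `h`. -/
noncomputable def pathCost (h : ℝ × ℝ → ℝ) (x y : ℝ × ℝ) (f : ℝ → ℝ) : ℝ :=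
  ∫ s in (x.1 + x.2)..(y.1 + y.2), h (f s, s - f s)

/-- Euclidean distance from a point to a set in `ℝ²`. -/
noncomputable def euclInfDist (z : ℝ × ℝ) (S : Set (ℝ × ℝ)) : ℝ :=
  sInf ((fun w : ℝ × ℝ => Real.sqrt ((z.1 - w.1) ^ 2 + (z.2 - w.2) ^ 2)) '' S)

/-!
A path meets each antidiagonal `z₁ + z₂ = s`, `x₁ + x₂ ≤ s ≤ y₁ + y₂`, in one point of the box
`[x, y]`, whose first coordinate ranges over `[max x₁ (s - y₂), min y₁ (s - x₂)]`. On the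
antidiagonal through a point of `ℓ`, the valley condition makes `h` unimodal with its minimum at
that point. Hence the path that at each `s` takes the point of `ℓ` clamped into this range
minimizes the integrand pointwise, and so the cost. The clamped path runs along `ℓ` where `ℓ`
crosses the box and along the boundary of the box elsewhere, which is the chain
`x → x̂ → ŷ → y`. If `ℓ` misses the box, the box lies on one side of `ℓ` by connectedness, the
clamped path passes through the corner on that side, and this corner is the nearer one to `ℓ`
unless the box is a point.
-/

open Set

theorem IsNorm.convexOn {N : ℝ × ℝ → ℝ} (hN : IsNorm N) : ConvexOn ℝ univ N := by
  refine ⟨convex_univ, fun z _ w _ a b ha hb _ => ?_⟩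
  calc N (a • z + b • w) ≤ N (a • z) + N (b • w) := hN.2.2.2 _ _
    _ = a • N z + b • N w := by
      rw [hN.2.2.1, hN.2.2.1, abs_of_nonneg ha, abs_of_nonneg hb, smul_eq_mul, smul_eq_mul]

theorem IsNorm.continuous {N : ℝ × ℝ → ℝ} (hN : IsNorm N) : Continuous N :=
  hN.convexOn.locallyLipschitz.continuous

theorem IsPath.mk_mem_Icc {x y : ℝ × ℝ} {s : ℝ} {g : ℝ → ℝ} (hg : IsPath x y g)
    (hs : s ∈ Icc (x.1 + x.2) (y.1 + y.2)) :
    ((g s, s - g s) : ℝ × ℝ) ∈ Icc x y := by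
  obtain ⟨hxy₁, hxy₂, hstart, hend, hmono, hmono'⟩ := hg
  have hx : x.1 + x.2 ∈ Icc (x.1 + x.2) (y.1 + y.2) := ⟨le_rfl, by linarith⟩
  have hy : y.1 + y.2 ∈ Icc (x.1 + x.2) (y.1 + y.2) := ⟨by linarith, le_rfl⟩
  have h₁ := hmono hx hs hs.1
  have h₂ := hmono hs hy hs.2
  have h₃ := hmono' hx hs hs.1
  have h₄ := hmono' hs hy hs.2
  simp only [hstart, hend] at h₁ h₂ h₃ h₄
  exact ⟨⟨h₁, by linarith⟩, ⟨h₂, by linarith⟩⟩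

theorem IsPath.lipschitzOnWith {x y : ℝ × ℝ} {g : ℝ → ℝ} (hg : IsPath x y g) :
    LipschitzOnWith 1 g (Icc (x.1 + x.2) (y.1 + y.2)) := by
  have key : ∀ a ∈ Icc (x.1 + x.2) (y.1 + y.2), ∀ b ∈ Icc (x.1 + x.2) (y.1 + y.2), a ≤ b →
      |g a - g b| ≤ |a - b| := by
    intro a ha b hb hab
    have h₁ := hg.2.2.2.2.1 ha hb hab
    have h₂ := hg.2.2.2.2.2 ha hb hab
    rw [abs_of_nonpos (by linarith), abs_of_nonpos (by linarith)]
    linarith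
  refine LipschitzOnWith.of_dist_le_mul fun a ha b hb => ?_
  rw [NNReal.coe_one, one_mul, Real.dist_eq, Real.dist_eq]
  rcases le_total a b with hab | hba
  · exact key a ha b hb hab
  · rw [abs_sub_comm, abs_sub_comm a]
    exact key b hb a ha hba

theorem IsPath.intervalIntegrable {x y : ℝ × ℝ} {h : ℝ × ℝ → ℝ} (hh : Continuous h) {g : ℝ → ℝ}
    (hg : IsPath x y g) :
    IntervalIntegrable (fun s => h (g s, s - g s)) MeasureTheory.volume
      (x.1 + x.2) (y.1 + y.2) := by
  have hcont := hg.lipschitzOnWith.continuousOn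
  refine ContinuousOn.intervalIntegrable ?_
  rw [uIcc_of_le (by linarith [hg.1, hg.2.1])]
  exact hh.comp_continuousOn (hcont.prodMk (continuousOn_id.sub hcont))

namespace ValleyPath

variable {x y z₀ d : ℝ × ℝ} {s a : ℝ}

def pathLower (x y : ℝ × ℝ) (s : ℝ) : ℝ := max x.1 (s - y.2)

def pathUpper (x y : ℝ × ℝ) (s : ℝ) : ℝ := min y.1 (s - x.2)

theorem mk_mem_Icc_iff : ((a, s - a) : ℝ × ℝ) ∈ Icc x y ↔
    a ∈ Icc (pathLower x y s) (pathUpper x y s) := by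
  simp only [mem_Icc, Prod.le_def, pathLower, pathUpper, max_le_iff, le_min_iff]
  constructor <;> rintro ⟨⟨h₁, h₂⟩, h₃, h₄⟩ <;> exact ⟨⟨h₁, by linarith⟩, h₃, by linarith⟩

theorem pathLower_le_pathUpper (hs : s ∈ Icc (x.1 + x.2) (y.1 + y.2)) (hxy₁ : x.1 ≤ y.1)
    (hxy₂ : x.2 ≤ y.2) :
    pathLower x y s ≤ pathUpper x y s := by
  obtain ⟨hs₁, hs₂⟩ := hs
  simp only [pathLower, pathUpper, max_le_iff, le_min_iff]
  exact ⟨⟨hxy₁, by linarith⟩, by linarith, by linarith⟩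

def clampPath (x y : ℝ × ℝ) (φ : ℝ → ℝ) (s : ℝ) : ℝ :=
  max (pathLower x y s) (min (pathUpper x y s) (φ s))

theorem isPath_clampPath {φ : ℝ → ℝ} (hφ : Monotone φ) (hφ' : Monotone fun s => s - φ s)
    (hxy₁ : x.1 ≤ y.1) (hxy₂ : x.2 ≤ y.2) : IsPath x y (clampPath x y φ) := by
  refine ⟨hxy₁, hxy₂, ?_, ?_, fun a _ b _ hab => ?_, fun a _ b _ hab => ?_⟩
  · simp only [clampPath, pathLower, pathUpper]; grind
  · simp only [clampPath, pathLower, pathUpper]; grind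
  · have := hφ hab
    simp only [clampPath, pathLower, pathUpper]; grind
  · have := hφ' hab
    simp only [clampPath, pathLower, pathUpper]; grind

theorem clampPath_of_mk_mem_Icc {φ : ℝ → ℝ} (hs : ((φ s, s - φ s) : ℝ × ℝ) ∈ Icc x y) :
    clampPath x y φ s = φ s := by
  obtain ⟨hlo, hhi⟩ := mk_mem_Icc_iff.1 hs
  rw [clampPath, min_eq_right hhi, max_eq_right hlo]

theorem clampPath_of_le_pathLower {φ : ℝ → ℝ} (hs : s ∈ Icc (x.1 + x.2) (y.1 + y.2))
    (hxy₁ : x.1 ≤ y.1) (hxy₂ : x.2 ≤ y.2) (hφ : φ s ≤ pathLower x y s) :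
    clampPath x y φ s = pathLower x y s := by
  rw [clampPath, min_eq_right (hφ.trans (pathLower_le_pathUpper hs hxy₁ hxy₂)), max_eq_left hφ]

theorem clampPath_of_pathUpper_le {φ : ℝ → ℝ} (hs : s ∈ Icc (x.1 + x.2) (y.1 + y.2))
    (hxy₁ : x.1 ≤ y.1) (hxy₂ : x.2 ≤ y.2) (hφ : pathUpper x y s ≤ φ s) :
    clampPath x y φ s = pathUpper x y s := by
  rw [clampPath, min_eq_left hφ, max_eq_right (pathLower_le_pathUpper hs hxy₁ hxy₂)]

theorem clamp_le_of_unimodal {F : ℝ → ℝ} {c lo hi : ℝ} (hanti : AntitoneOn F (Iic c))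
    (hmono : MonotoneOn F (Ici c)) (ha : a ∈ Icc lo hi) : F (max lo (min hi c)) ≤ F a := by
  rcases le_total c lo with hc | hc
  · rw [max_eq_left ((min_le_right _ _).trans hc)]
    exact hmono hc (hc.trans ha.1) ha.1
  rcases le_total hi c with hc' | hc'
  · rw [min_eq_left hc', max_eq_right (ha.1.trans ha.2)]
    exact hanti (ha.2.trans hc') hc' ha.2
  rw [min_eq_right hc', max_eq_right hc]
  rcases le_total a c with hac | hca
  · exact hanti hac self_mem_Iic hac
  · exact hmono self_mem_Ici hca hca

theorem antitoneOn_and_monotoneOn_antidiagonal {h : ℝ × ℝ → ℝ} {z : ℝ × ℝ}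
    (hanti : AntitoneOn (fun t => h (z.1 + t, z.2 - t)) (Iic 0))
    (hmono : MonotoneOn (fun t => h (z.1 + t, z.2 - t)) (Ici 0)) :
    AntitoneOn (fun a => h (a, z.1 + z.2 - a)) (Iic z.1) ∧
      MonotoneOn (fun a => h (a, z.1 + z.2 - a)) (Ici z.1) := by
  have shift : ∀ a, h (a, z.1 + z.2 - a) = h (z.1 + (a - z.1), z.2 - (a - z.1)) := fun a => by
    ring_nf
  constructor
  · intro a ha b hb hab
    simp only [shift]
    exact hanti (mem_Iic.2 (sub_nonpos.2 ha)) (mem_Iic.2 (sub_nonpos.2 hb)) (sub_le_sub_right hab _)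
  · intro a ha b hb hab
    simp only [shift]
    exact hmono (mem_Ici.2 (sub_nonneg.2 ha)) (mem_Ici.2 (sub_nonneg.2 hb)) (sub_le_sub_right hab _)

theorem pathCost_clampPath_le {h : ℝ × ℝ → ℝ} (hh : Continuous h) {φ : ℝ → ℝ}
    (hφ : Monotone φ) (hφ' : Monotone fun s => s - φ s)
    (hvalley : ∀ s, AntitoneOn (fun t => h (φ s + t, s - φ s - t)) (Iic 0) ∧
      MonotoneOn (fun t => h (φ s + t, s - φ s - t)) (Ici 0))
    {g : ℝ → ℝ} (hg : IsPath x y g) :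
    pathCost h x y (clampPath x y φ) ≤ pathCost h x y g := by
  refine intervalIntegral.integral_mono_on (by linarith [hg.1, hg.2.1])
    ((isPath_clampPath hφ hφ' hg.1 hg.2.1).intervalIntegrable hh) (hg.intervalIntegrable hh)
    fun s hs => ?_
  obtain ⟨hanti, hmono⟩ :=
    antitoneOn_and_monotoneOn_antidiagonal (z := (φ s, s - φ s)) (hvalley s).1 (hvalley s).2
  simp only [add_sub_cancel] at hanti hmono
  exact clamp_le_of_unimodal (F := fun a => h (a, s - a)) hanti hmono
    (mk_mem_Icc_iff.1 (hg.mk_mem_Icc hs))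

def line (z₀ d : ℝ × ℝ) : Set (ℝ × ℝ) := {z | ∃ lam : ℝ, z = z₀ + lam • d}

/-- The first coordinate of the point of `line z₀ d` whose coordinates sum to `s`. -/
noncomputable def lineFst (z₀ d : ℝ × ℝ) (s : ℝ) : ℝ :=
  z₀.1 + (s - (z₀.1 + z₀.2)) * (d.1 / (d.1 + d.2))

def lineOffset (z₀ d z : ℝ × ℝ) : ℝ := d.2 * (z.1 - z₀.1) - d.1 * (z.2 - z₀.2)

theorem lineOffset_eq (hd : d.1 + d.2 ≠ 0) (z : ℝ × ℝ) :
    lineOffset z₀ d z = (d.1 + d.2) * (z.1 - lineFst z₀ d (z.1 + z.2)) := by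
  simp only [lineOffset, lineFst]
  field_simp
  ring

theorem mem_line_iff (hd : d.1 + d.2 ≠ 0) {z : ℝ × ℝ} :
    z ∈ line z₀ d ↔ lineFst z₀ d (z.1 + z.2) = z.1 := by
  constructor
  · rintro ⟨lam, rfl⟩
    simp only [lineFst, Prod.fst_add, Prod.snd_add, Prod.smul_fst, Prod.smul_snd, smul_eq_mul]
    field_simp
    ring
  · intro hz
    set lam := (z.1 + z.2 - (z₀.1 + z₀.2)) / (d.1 + d.2) with hlam
    have hlam' : lam * (d.1 + d.2) = z.1 + z.2 - (z₀.1 + z₀.2) := div_mul_cancel₀ _ hd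
    have h₁ : z.1 = z₀.1 + lam * d.1 := by rw [← hz, lineFst, hlam]; ring
    refine ⟨lam, Prod.ext ?_ ?_⟩ <;>
      simp only [Prod.fst_add, Prod.snd_add, Prod.smul_fst, Prod.smul_snd, smul_eq_mul]
    · exact h₁
    · linear_combination -hlam' - h₁

theorem mem_line_iff_lineOffset_eq_zero (hd : d.1 + d.2 ≠ 0) {z : ℝ × ℝ} :
    z ∈ line z₀ d ↔ lineOffset z₀ d z = 0 := by
  rw [mem_line_iff hd, lineOffset_eq hd, mul_eq_zero, sub_eq_zero]
  simp [hd, eq_comm]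

theorem mk_lineFst_mem_line (hd : d.1 + d.2 ≠ 0) (s : ℝ) :
    ((lineFst z₀ d s, s - lineFst z₀ d s) : ℝ × ℝ) ∈ line z₀ d := by
  rw [mem_line_iff hd, add_sub_cancel]

theorem lineFst_monotone (hd₁ : 0 ≤ d.1) (hd₂ : 0 ≤ d.2) : Monotone (lineFst z₀ d) :=
  fun a b hab => by
    simp only [lineFst]
    gcongr

theorem sub_lineFst_monotone (hd₁ : 0 ≤ d.1) (hd₂ : 0 ≤ d.2) :
    Monotone fun s => s - lineFst z₀ d s := fun a b hab => by
  have hr : d.1 / (d.1 + d.2) ≤ 1 := div_le_one_of_le₀ (by linarith) (by linarith)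
  simp only [lineFst]
  nlinarith

theorem euclInfDist_line (hd : d.1 ≠ 0) (z : ℝ × ℝ) :
    euclInfDist z (line z₀ d) = |lineOffset z₀ d z| / √(d.1 ^ 2 + d.2 ^ 2) := by
  have hQ : 0 < d.1 ^ 2 + d.2 ^ 2 := by positivity
  set S := lineOffset z₀ d z
  -- Lagrange's identity for the displacement from `z₀ + lam • d` to `z`
  have hsq : ∀ lam : ℝ, (z.1 - (z₀ + lam • d).1) ^ 2 + (z.2 - (z₀ + lam • d).2) ^ 2 =
      (S ^ 2 + ((z.1 - z₀.1) * d.1 + (z.2 - z₀.2) * d.2 - lam * (d.1 ^ 2 + d.2 ^ 2)) ^ 2) /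
        (d.1 ^ 2 + d.2 ^ 2) := fun lam => by
    simp only [S, lineOffset, Prod.fst_add, Prod.snd_add, Prod.smul_fst, Prod.smul_snd,
      smul_eq_mul]
    field_simp
    ring
  have habs : |S| / √(d.1 ^ 2 + d.2 ^ 2) = √(S ^ 2 / (d.1 ^ 2 + d.2 ^ 2)) := by
    rw [Real.sqrt_div' _ hQ.le, Real.sqrt_sq_eq_abs]
  rw [euclInfDist, habs]
  refine IsLeast.csInf_eq ⟨⟨z₀ + (((z.1 - z₀.1) * d.1 + (z.2 - z₀.2) * d.2) /
    (d.1 ^ 2 + d.2 ^ 2)) • d, ⟨_, rfl⟩, ?_⟩, ?_⟩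
  · beta_reduce
    rw [hsq, div_mul_cancel₀ _ hQ.ne', sub_self]
    simp
  · rintro _ ⟨_, ⟨lam, rfl⟩, rfl⟩
    beta_reduce
    rw [hsq]
    gcongr
    exact le_add_of_nonneg_right (sq_nonneg _)

theorem lineOffset_swap_corner (x y : ℝ × ℝ) :
    lineOffset z₀ d (y.1, x.2) =
      lineOffset z₀ d (x.1, y.2) + (d.2 * (y.1 - x.1) + d.1 * (y.2 - x.2)) := by
  simp only [lineOffset]
  ring

theorem corner_eq_of_lineOffset_pos (hd₁ : 0 < d.1) (hd₂ : 0 < d.2) (hxy₁ : x.1 ≤ y.1)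
    (hxy₂ : x.2 ≤ y.2) (hpos : 0 < lineOffset z₀ d (x.1, y.2))
    (hle : euclInfDist (y.1, x.2) (line z₀ d) ≤ euclInfDist (x.1, y.2) (line z₀ d)) :
    ((y.1, x.2) : ℝ × ℝ) = (x.1, y.2) := by
  have hcorner := lineOffset_swap_corner (z₀ := z₀) (d := d) x y
  rw [euclInfDist_line hd₁.ne', euclInfDist_line hd₁.ne',
    div_le_div_iff_of_pos_right (Real.sqrt_pos.2 (by positivity)),
    abs_of_pos hpos, abs_of_pos (by nlinarith)] at hle
  ext <;> dsimp only <;> nlinarith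

theorem corner_eq_of_lineOffset_neg (hd₁ : 0 < d.1) (hd₂ : 0 < d.2) (hxy₁ : x.1 ≤ y.1)
    (hxy₂ : x.2 ≤ y.2) (hneg : lineOffset z₀ d (y.1, x.2) < 0)
    (hle : euclInfDist (x.1, y.2) (line z₀ d) ≤ euclInfDist (y.1, x.2) (line z₀ d)) :
    ((x.1, y.2) : ℝ × ℝ) = (y.1, x.2) := by
  have hcorner := lineOffset_swap_corner (z₀ := z₀) (d := d) x y
  rw [euclInfDist_line hd₁.ne', euclInfDist_line hd₁.ne',
    div_le_div_iff_of_pos_right (Real.sqrt_pos.2 (by positivity)),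
    abs_of_neg hneg, abs_of_neg (by nlinarith)] at hle
  ext <;> dsimp only <;> nlinarith

theorem lineOffset_pos_or_neg (hd : d.1 + d.2 ≠ 0) (hempty : line z₀ d ∩ Icc x y = ∅) :
    (∀ z ∈ Icc x y, 0 < lineOffset z₀ d z) ∨ ∀ z ∈ Icc x y, lineOffset z₀ d z < 0 :=
  (convex_Icc x y).isPreconnected.mapsTo_Ioi_or_Iio
    (by unfold lineOffset; fun_prop)
    fun z hz h0 => hempty.subset ⟨(mem_line_iff_lineOffset_eq_zero hd).2 h0, hz⟩

theorem fst_eq_or_snd_eq_of_isLeast (hd₁ : 0 < d.1) (hd₂ : 0 < d.2) {xh : ℝ × ℝ}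
    (hxh : IsLeast (line z₀ d ∩ Icc x y) xh) : xh.1 = x.1 ∨ xh.2 = x.2 := by
  obtain ⟨⟨hline, hx, hy⟩, hmin⟩ := hxh
  have hc := (mem_line_iff (by positivity)).1 hline
  by_contra! hne
  -- step back along the line by `δ` in the coordinate sum; the new point is still in the box
  set δ := min (xh.1 - x.1) (xh.2 - x.2)
  have hδ : 0 < δ :=
    lt_min (sub_pos.2 (hx.1.lt_of_ne' hne.1)) (sub_pos.2 (hx.2.lt_of_ne' hne.2))
  set s := xh.1 + xh.2 - δ
  have hs : s ≤ xh.1 + xh.2 := by linarith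
  have h₁ := lineFst_monotone (z₀ := z₀) hd₁.le hd₂.le hs
  have h₂ := sub_lineFst_monotone (z₀ := z₀) hd₁.le hd₂.le hs
  dsimp only at h₂
  rw [hc] at h₁ h₂
  have hδ₁ := min_le_left (xh.1 - x.1) (xh.2 - x.2)
  have hδ₂ := min_le_right (xh.1 - x.1) (xh.2 - x.2)
  have hmem : ((lineFst z₀ d s, s - lineFst z₀ d s) : ℝ × ℝ) ∈ line z₀ d ∩ Icc x y :=
    ⟨mk_lineFst_mem_line (by positivity) s, ⟨by linarith, by linarith⟩,
      ⟨by linarith [hy.1], by linarith [hy.2]⟩⟩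
  have := hmin hmem
  linarith [this.1, this.2]

theorem fst_eq_or_snd_eq_of_isGreatest (hd₁ : 0 < d.1) (hd₂ : 0 < d.2) {yh : ℝ × ℝ}
    (hyh : IsGreatest (line z₀ d ∩ Icc x y) yh) : yh.1 = y.1 ∨ yh.2 = y.2 := by
  obtain ⟨⟨hline, hx, hy⟩, hmax⟩ := hyh
  have hc := (mem_line_iff (by positivity)).1 hline
  by_contra! hne
  set δ := min (y.1 - yh.1) (y.2 - yh.2)
  have hδ : 0 < δ :=
    lt_min (sub_pos.2 (hy.1.lt_of_ne hne.1)) (sub_pos.2 (hy.2.lt_of_ne hne.2))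
  set s := yh.1 + yh.2 + δ
  have hs : yh.1 + yh.2 ≤ s := by linarith
  have h₁ := lineFst_monotone (z₀ := z₀) hd₁.le hd₂.le hs
  have h₂ := sub_lineFst_monotone (z₀ := z₀) hd₁.le hd₂.le hs
  dsimp only at h₂
  rw [hc] at h₁ h₂
  have hδ₁ := min_le_left (y.1 - yh.1) (y.2 - yh.2)
  have hδ₂ := min_le_right (y.1 - yh.1) (y.2 - yh.2)
  have hmem : ((lineFst z₀ d s, s - lineFst z₀ d s) : ℝ × ℝ) ∈ line z₀ d ∩ Icc x y :=
    ⟨mk_lineFst_mem_line (by positivity) s, ⟨by linarith [hx.1], by linarith [hx.2]⟩,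
      ⟨by linarith, by linarith⟩⟩
  have := hmax hmem
  linarith [this.1, this.2]

theorem image_Icc_eq_segment {φ : ℝ → ℝ} {a b : ℝ × ℝ} (hab : a.1 + a.2 ≤ b.1 + b.2) {α β : ℝ}
    (hφ : EqOn φ (fun s => α + β * s) (Icc (a.1 + a.2) (b.1 + b.2)))
    (ha : φ (a.1 + a.2) = a.1) (hb : φ (b.1 + b.2) = b.1) :
    (fun s => ((φ s, s - φ s) : ℝ × ℝ)) '' Icc (a.1 + a.2) (b.1 + b.2) = segment ℝ a b := by
  let A : ℝ →ᵃ[ℝ] ℝ × ℝ := AffineMap.lineMap (α, -α) (α + β, 1 - α - β)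
  have hA : EqOn (fun s => ((φ s, s - φ s) : ℝ × ℝ)) A (Icc (a.1 + a.2) (b.1 + b.2)) :=
    fun s hs => by
      simp only [A, AffineMap.lineMap_apply, hφ hs]
      ext <;> simp <;> ring
  rw [hA.image_eq, ← segment_eq_Icc hab, image_segment, ← hA ⟨le_rfl, hab⟩, ← hA ⟨hab, le_rfl⟩]
  simp only [ha, hb, add_sub_cancel_left]

theorem clampPath_lineFst_eqOn_of_isLeast (hd₁ : 0 < d.1) (hd₂ : 0 < d.2) {xh : ℝ × ℝ}
    (hxh : IsLeast (line z₀ d ∩ Icc x y) xh) : ∃ α β : ℝ, EqOn (clampPath x y (lineFst z₀ d))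
      (fun s => α + β * s) (Icc (x.1 + x.2) (xh.1 + xh.2)) := by
  have hcorner := fst_eq_or_snd_eq_of_isLeast hd₁ hd₂ hxh
  obtain ⟨⟨hline, hx, hy⟩, -⟩ := hxh
  have hc := (mem_line_iff (by positivity)).1 hline
  have hxy₁ : x.1 ≤ y.1 := hx.1.trans hy.1
  have hxy₂ : x.2 ≤ y.2 := hx.2.trans hy.2
  have hIcc : ∀ s ∈ Icc (x.1 + x.2) (xh.1 + xh.2), s ∈ Icc (x.1 + x.2) (y.1 + y.2) :=
    fun s hs => ⟨hs.1, by linarith [hs.2, hy.1, hy.2]⟩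
  -- before `x̂` the point of the line lies left of, resp. below, the box
  rcases hcorner with h₁ | h₂
  · refine ⟨x.1, 0, fun s hs => ?_⟩
    have hcs := lineFst_monotone (z₀ := z₀) hd₁.le hd₂.le hs.2
    rw [hc, h₁] at hcs
    rw [clampPath_of_le_pathLower (hIcc s hs) hxy₁ hxy₂ (hcs.trans (le_max_left _ _)), pathLower,
      max_eq_left (by linarith [hs.2, hy.2])]
    ring
  · refine ⟨-x.2, 1, fun s hs => ?_⟩
    have hcs := sub_lineFst_monotone (z₀ := z₀) hd₁.le hd₂.le hs.2
    dsimp only at hcs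
    rw [hc] at hcs
    rw [clampPath_of_pathUpper_le (hIcc s hs) hxy₁ hxy₂ ((min_le_right _ _).trans (by linarith)),
      pathUpper, min_eq_right (by linarith [hs.2, hy.1])]
    ring

theorem clampPath_lineFst_eqOn_of_isGreatest (hd₁ : 0 < d.1) (hd₂ : 0 < d.2) {yh : ℝ × ℝ}
    (hyh : IsGreatest (line z₀ d ∩ Icc x y) yh) : ∃ α β : ℝ, EqOn (clampPath x y (lineFst z₀ d))
      (fun s => α + β * s) (Icc (yh.1 + yh.2) (y.1 + y.2)) := by
  have hcorner := fst_eq_or_snd_eq_of_isGreatest hd₁ hd₂ hyh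
  obtain ⟨⟨hline, hx, hy⟩, -⟩ := hyh
  have hc := (mem_line_iff (by positivity)).1 hline
  have hxy₁ : x.1 ≤ y.1 := hx.1.trans hy.1
  have hxy₂ : x.2 ≤ y.2 := hx.2.trans hy.2
  have hIcc : ∀ s ∈ Icc (yh.1 + yh.2) (y.1 + y.2), s ∈ Icc (x.1 + x.2) (y.1 + y.2) :=
    fun s hs => ⟨by linarith [hs.1, hx.1, hx.2], hs.2⟩
  rcases hcorner with h₁ | h₂
  · refine ⟨y.1, 0, fun s hs => ?_⟩
    have hcs := lineFst_monotone (z₀ := z₀) hd₁.le hd₂.le hs.1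
    rw [hc, h₁] at hcs
    rw [clampPath_of_pathUpper_le (hIcc s hs) hxy₁ hxy₂ ((min_le_left _ _).trans hcs), pathUpper,
      min_eq_left (by linarith [hs.1, hx.2])]
    ring
  · refine ⟨-y.2, 1, fun s hs => ?_⟩
    have hcs := sub_lineFst_monotone (z₀ := z₀) hd₁.le hd₂.le hs.1
    dsimp only at hcs
    rw [hc] at hcs
    rw [clampPath_of_le_pathLower (hIcc s hs) hxy₁ hxy₂ ((by linarith : _ ≤ s - y.2).trans
      (le_max_right _ _)), pathLower, max_eq_right (by linarith [hs.1, hx.1])]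
    ring

theorem clampPath_lineFst_eqOn_of_mem (hd₁ : 0 < d.1) (hd₂ : 0 < d.2) {xh yh : ℝ × ℝ}
    (hxh : xh ∈ line z₀ d ∩ Icc x y) (hyh : yh ∈ line z₀ d ∩ Icc x y) :
    EqOn (clampPath x y (lineFst z₀ d)) (lineFst z₀ d) (Icc (xh.1 + xh.2) (yh.1 + yh.2)) := by
  intro s hs
  have hcx := (mem_line_iff (z₀ := z₀) (by positivity)).1 hxh.1
  have hcy := (mem_line_iff (z₀ := z₀) (by positivity)).1 hyh.1
  have h₁ := lineFst_monotone (z₀ := z₀) hd₁.le hd₂.le hs.1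
  have h₂ := lineFst_monotone (z₀ := z₀) hd₁.le hd₂.le hs.2
  have h₃ := sub_lineFst_monotone (z₀ := z₀) hd₁.le hd₂.le hs.1
  have h₄ := sub_lineFst_monotone (z₀ := z₀) hd₁.le hd₂.le hs.2
  dsimp only at h₃ h₄
  rw [hcx] at h₁ h₃
  rw [hcy] at h₂ h₄
  obtain ⟨hx, -⟩ := hxh.2
  obtain ⟨-, hy⟩ := hyh.2
  exact clampPath_of_mk_mem_Icc ⟨⟨by linarith [hx.1], by linarith [hx.2]⟩,
    ⟨by linarith [hy.1], by linarith [hy.2]⟩⟩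

theorem image_clampPath_lineFst_of_isLeast_of_isGreatest (hd₁ : 0 < d.1) (hd₂ : 0 < d.2)
    {xh yh : ℝ × ℝ}
    (hxh : IsLeast (line z₀ d ∩ Icc x y) xh) (hyh : IsGreatest (line z₀ d ∩ Icc x y) yh) :
    (fun s => ((clampPath x y (lineFst z₀ d) s, s - clampPath x y (lineFst z₀ d) s) : ℝ × ℝ)) ''
      Icc (x.1 + x.2) (y.1 + y.2) = segment ℝ x xh ∪ segment ℝ xh yh ∪ segment ℝ yh y := by
  obtain ⟨hx, hxhy⟩ := hxh.1.2
  obtain ⟨-, hy⟩ := hyh.1.2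
  have hle : xh ≤ yh := hxh.2 hyh.1
  have hpath := isPath_clampPath (lineFst_monotone (z₀ := z₀) hd₁.le hd₂.le)
    (sub_lineFst_monotone hd₁.le hd₂.le) (hx.1.trans hxhy.1) (hx.2.trans hxhy.2)
  have hmid := clampPath_lineFst_eqOn_of_mem hd₁ hd₂ hxh.1 hyh.1
  have hcx := (mem_line_iff (z₀ := z₀) (by positivity)).1 hxh.1.1
  have hcy := (mem_line_iff (z₀ := z₀) (by positivity)).1 hyh.1.1
  have hmid_affine : EqOn (clampPath x y (lineFst z₀ d))
      (fun s => (z₀.1 - (z₀.1 + z₀.2) * (d.1 / (d.1 + d.2))) + d.1 / (d.1 + d.2) * s)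
      (Icc (xh.1 + xh.2) (yh.1 + yh.2)) := fun s hs => by
    rw [hmid hs, lineFst]
    ring
  have hsum : xh.1 + xh.2 ≤ yh.1 + yh.2 := by linarith [hle.1, hle.2]
  have hfx := (hmid ⟨le_rfl, hsum⟩).trans hcx
  have hfy := (hmid ⟨hsum, le_rfl⟩).trans hcy
  obtain ⟨α₁, β₁, hfirst⟩ := clampPath_lineFst_eqOn_of_isLeast hd₁ hd₂ hxh
  obtain ⟨α₃, β₃, hlast⟩ := clampPath_lineFst_eqOn_of_isGreatest hd₁ hd₂ hyh
  rw [← Icc_union_Icc_eq_Icc (by linarith [hx.1, hx.2]) (by linarith [hy.1, hy.2] :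
      yh.1 + yh.2 ≤ y.1 + y.2),
    ← Icc_union_Icc_eq_Icc (by linarith [hx.1, hx.2]) hsum, image_union, image_union,
    image_Icc_eq_segment (by linarith [hx.1, hx.2]) hfirst hpath.2.2.1 hfx,
    image_Icc_eq_segment hsum hmid_affine hfx hfy,
    image_Icc_eq_segment (by linarith [hy.1, hy.2]) hlast hfy hpath.2.2.2.1]

theorem image_clampPath_of_le_pathLower (hxy₁ : x.1 ≤ y.1) (hxy₂ : x.2 ≤ y.2) {φ : ℝ → ℝ}
    (hφ : ∀ s ∈ Icc (x.1 + x.2) (y.1 + y.2), φ s ≤ pathLower x y s) :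
    (fun s => ((clampPath x y φ s, s - clampPath x y φ s) : ℝ × ℝ)) ''
      Icc (x.1 + x.2) (y.1 + y.2) = segment ℝ x (x.1, y.2) ∪ segment ℝ (x.1, y.2) y := by
  have hlower : EqOn (clampPath x y φ) (pathLower x y) (Icc (x.1 + x.2) (y.1 + y.2)) :=
    fun s hs => clampPath_of_le_pathLower hs hxy₁ hxy₂ (hφ s hs)
  have h₁ : EqOn (clampPath x y φ) (fun s => x.1 + 0 * s) (Icc (x.1 + x.2) (x.1 + y.2)) :=
    fun s hs => by
      rw [hlower ⟨hs.1, by linarith [hs.2]⟩, pathLower, max_eq_left (by linarith [hs.2])]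
      ring
  have h₂ : EqOn (clampPath x y φ) (fun s => -y.2 + 1 * s) (Icc (x.1 + y.2) (y.1 + y.2)) :=
    fun s hs => by
      rw [hlower ⟨by linarith [hs.1], hs.2⟩, pathLower, max_eq_right (by linarith [hs.1])]
      ring
  have hcorner : clampPath x y φ (x.1 + y.2) = x.1 := (h₁ ⟨by linarith, le_rfl⟩).trans (by ring)
  rw [← Icc_union_Icc_eq_Icc (by linarith) (by linarith : x.1 + y.2 ≤ y.1 + y.2), image_union,
    image_Icc_eq_segment (b := (x.1, y.2)) (by dsimp only; linarith) h₁
      (by rw [hlower ⟨le_rfl, by linarith⟩, pathLower, max_eq_left (by linarith)]) hcorner,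
    image_Icc_eq_segment (a := (x.1, y.2)) (by dsimp only; linarith) h₂ hcorner
      (by rw [hlower ⟨by linarith, le_rfl⟩, pathLower, max_eq_right (by linarith)]; ring)]

theorem image_clampPath_of_pathUpper_le (hxy₁ : x.1 ≤ y.1) (hxy₂ : x.2 ≤ y.2) {φ : ℝ → ℝ}
    (hφ : ∀ s ∈ Icc (x.1 + x.2) (y.1 + y.2), pathUpper x y s ≤ φ s) :
    (fun s => ((clampPath x y φ s, s - clampPath x y φ s) : ℝ × ℝ)) ''
      Icc (x.1 + x.2) (y.1 + y.2) = segment ℝ x (y.1, x.2) ∪ segment ℝ (y.1, x.2) y := by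
  have hupper : EqOn (clampPath x y φ) (pathUpper x y) (Icc (x.1 + x.2) (y.1 + y.2)) :=
    fun s hs => clampPath_of_pathUpper_le hs hxy₁ hxy₂ (hφ s hs)
  have h₁ : EqOn (clampPath x y φ) (fun s => -x.2 + 1 * s) (Icc (x.1 + x.2) (y.1 + x.2)) :=
    fun s hs => by
      rw [hupper ⟨hs.1, by linarith [hs.2]⟩, pathUpper, min_eq_right (by linarith [hs.2])]
      ring
  have h₂ : EqOn (clampPath x y φ) (fun s => y.1 + 0 * s) (Icc (y.1 + x.2) (y.1 + y.2)) :=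
    fun s hs => by
      rw [hupper ⟨by linarith [hs.1], hs.2⟩, pathUpper, min_eq_left (by linarith [hs.1])]
      ring
  have hcorner : clampPath x y φ (y.1 + x.2) = y.1 := (h₁ ⟨by linarith, le_rfl⟩).trans (by ring)
  rw [← Icc_union_Icc_eq_Icc (by linarith) (by linarith : y.1 + x.2 ≤ y.1 + y.2), image_union,
    image_Icc_eq_segment (b := (y.1, x.2)) (by dsimp only; linarith) h₁
      (by rw [hupper ⟨le_rfl, by linarith⟩, pathUpper, min_eq_right (by linarith)]; ring) hcorner,
    image_Icc_eq_segment (a := (y.1, x.2)) (by dsimp only; linarith) h₂ hcorner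
      (by rw [hupper ⟨by linarith, le_rfl⟩, pathUpper, min_eq_left (by linarith)])]

theorem lineFst_le_pathLower (hd : 0 < d.1 + d.2) (hxy₁ : x.1 ≤ y.1) (hxy₂ : x.2 ≤ y.2)
    (hpos : ∀ z ∈ Icc x y, 0 < lineOffset z₀ d z) {s : ℝ}
    (hs : s ∈ Icc (x.1 + x.2) (y.1 + y.2)) : lineFst z₀ d s ≤ pathLower x y s := by
  have h := hpos _ (mk_mem_Icc_iff.2 ⟨le_rfl, pathLower_le_pathUpper hs hxy₁ hxy₂⟩)
  rw [lineOffset_eq hd.ne', add_sub_cancel] at h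
  exact (sub_pos.1 (pos_of_mul_pos_right h hd.le)).le

theorem pathUpper_le_lineFst (hd : 0 < d.1 + d.2) (hxy₁ : x.1 ≤ y.1) (hxy₂ : x.2 ≤ y.2)
    (hneg : ∀ z ∈ Icc x y, lineOffset z₀ d z < 0) {s : ℝ}
    (hs : s ∈ Icc (x.1 + x.2) (y.1 + y.2)) : pathUpper x y s ≤ lineFst z₀ d s := by
  have h := hneg _ (mk_mem_Icc_iff.2 ⟨pathLower_le_pathUpper hs hxy₁ hxy₂, le_rfl⟩)
  rw [lineOffset_eq hd.ne', add_sub_cancel] at h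
  exact (sub_neg.1 (neg_of_mul_neg_right h hd.le)).le

end ValleyPath

open ValleyPath in
theorem valley_induced_optimal_paths
    (N : ℝ × ℝ → ℝ) (hN : IsNorm N)
    (p q w u : ℝ × ℝ)
    (h : ℝ × ℝ → ℝ)
    (hh : ∀ z : ℝ × ℝ, h z = N ((p + z.1 • w) - (q + z.2 • u)))
    (z₀ d : ℝ × ℝ) (hd1 : 0 < d.1) (hd2 : 0 < d.2)
    (ℓ : Set (ℝ × ℝ)) (hℓ : ℓ = {z : ℝ × ℝ | ∃ lam : ℝ, z = z₀ + lam • d})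
    (hvalley : ∀ z ∈ ℓ,
      AntitoneOn (fun t => h (z.1 + t, z.2 - t)) (Set.Iic 0) ∧
      MonotoneOn (fun t => h (z.1 + t, z.2 - t)) (Set.Ici 0))
    (x y : ℝ × ℝ) (hxy1 : x.1 ≤ y.1) (hxy2 : x.2 ≤ y.2)
    (Ξ : Set (ℝ × ℝ)) (hΞ : Ξ = Set.Icc x.1 y.1 ×ˢ Set.Icc x.2 y.2) :
    -- (i)
    (∀ xh yh : ℝ × ℝ,
      xh ∈ ℓ ∩ Ξ → (∀ z ∈ ℓ ∩ Ξ, xh.1 ≤ z.1 ∧ xh.2 ≤ z.2) →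
      yh ∈ ℓ ∩ Ξ → (∀ z ∈ ℓ ∩ Ξ, z.1 ≤ yh.1 ∧ z.2 ≤ yh.2) →
      ∃ f : ℝ → ℝ, IsPath x y f ∧
        ((fun s => ((f s, s - f s) : ℝ × ℝ)) '' Set.Icc (x.1 + x.2) (y.1 + y.2)
          = segment ℝ x xh ∪ segment ℝ xh yh ∪ segment ℝ yh y) ∧
        ∀ g : ℝ → ℝ, IsPath x y g → pathCost h x y f ≤ pathCost h x y g) ∧
    -- (ii)
    (ℓ ∩ Ξ = ∅ →
      ∀ ξ : ℝ × ℝ,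
        ((ξ = (x.1, y.2) ∧ euclInfDist (x.1, y.2) ℓ ≤ euclInfDist (y.1, x.2) ℓ) ∨
         (ξ = (y.1, x.2) ∧ euclInfDist (y.1, x.2) ℓ ≤ euclInfDist (x.1, y.2) ℓ)) →
        ∃ f : ℝ → ℝ, IsPath x y f ∧
          ((fun s => ((f s, s - f s) : ℝ × ℝ)) '' Set.Icc (x.1 + x.2) (y.1 + y.2)
            = segment ℝ x ξ ∪ segment ℝ ξ y) ∧
          ∀ g : ℝ → ℝ, IsPath x y g → pathCost h x y f ≤ pathCost h x y g) := by
  subst hℓ hΞ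
  rw [← Icc_prod_eq]
  have hd : 0 < d.1 + d.2 := by positivity
  have hcont : Continuous h := funext hh ▸ hN.continuous.comp (by fun_prop)
  have hmono := lineFst_monotone (z₀ := z₀) hd1.le hd2.le
  have hmono' := sub_lineFst_monotone (z₀ := z₀) hd1.le hd2.le
  have hopt : ∀ g, IsPath x y g →
      pathCost h x y (clampPath x y (lineFst z₀ d)) ≤ pathCost h x y g :=
    fun g => pathCost_clampPath_le hcont hmono hmono'
      (fun s => hvalley _ (mk_lineFst_mem_line hd.ne' s))
  refine ⟨fun xh yh hxh hmin hyh hmax => ⟨_, isPath_clampPath hmono hmono' hxy1 hxy2,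
    image_clampPath_lineFst_of_isLeast_of_isGreatest hd1 hd2 ⟨hxh, hmin⟩ ⟨hyh, hmax⟩, hopt⟩,
    fun hempty ξ hξ => ⟨_, isPath_clampPath hmono hmono' hxy1 hxy2, ?_, hopt⟩⟩
  have hcorner_left : ((x.1, y.2) : ℝ × ℝ) ∈ Icc x y := ⟨⟨le_rfl, hxy2⟩, hxy1, le_rfl⟩
  have hcorner_right : ((y.1, x.2) : ℝ × ℝ) ∈ Icc x y := ⟨⟨hxy1, le_rfl⟩, le_rfl, hxy2⟩
  rcases lineOffset_pos_or_neg hd.ne' hempty with hpos | hneg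
  · rw [image_clampPath_of_le_pathLower hxy1 hxy2
      fun s => lineFst_le_pathLower hd hxy1 hxy2 hpos]
    rcases hξ with ⟨rfl, -⟩ | ⟨rfl, hle⟩
    · rfl
    · rw [corner_eq_of_lineOffset_pos hd1 hd2 hxy1 hxy2 (hpos _ hcorner_left) hle]
  · rw [image_clampPath_of_pathUpper_le hxy1 hxy2
      fun s => pathUpper_le_lineFst hd hxy1 hxy2 hneg]
    rcases hξ with ⟨rfl, hle⟩ | ⟨rfl, -⟩
    · rw [corner_eq_of_lineOffset_neg hd1 hd2 hxy1 hxy2 (hneg _ hcorner_right) hle]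
    · rfl
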